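/- For every pooled incentive P ≥ 0: if (1, 1) is a Nash equilibrium of the effort game under Equal Allocation, then (1, 1) is a Nash equilibrium of the effort game under Output Agreement; and if (1, 1) is a Nash equilibrium of the effort game under Output Agreement, then (1, 1) is a Nash equilibrium of the effort game under the Shapley Value mechanism. (SV incentivizes joint effort exertion at least as well as OA, which in turn does so at least as well as EA.) -/

import Mathlib

noncomputable section

/-- Team solution accuracy as a function of the effort profile `(eH, eL) ∈ {0,1}²`. -/
def pT (a : ℝ) (eH eL : ℕ) : ℝ :=
  if eH + eL = 0 then 1 / 2 else if eH + eL = 1 then (2 * a + 1) / 4 else a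

/-- Each member's share of the incentive pool under Equal Allocation. -/
def pEA (_eH _eL : ℕ) : ℝ := 1 / 2

/-- Each member's expected share of the incentive pool under Output Agreement. -/
def pOA (a : ℝ) (eH eL : ℕ) : ℝ :=
  if eH = 1 ∧ eL = 1 then (2 * a ^ 2 - 2 * a + 1) / 2 else 1 / 4

/-- Member H's share of the incentive pool under the Shapley Value mechanism. -/
def pSVH (eH eL : ℕ) : ℝ :=
  if eH = 1 ∧ eL = 0 then 1 else if eH = 0 ∧ eL = 1 then 0 else 1 / 2

/-- Member L's share of the incentive pool under the Shapley Value mechanism. -/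
def pSVL (eH eL : ℕ) : ℝ := 1 - pSVH eH eL

/-- Nash equilibrium of the effort game with share functions `(pH, pL)` and pooled
incentive `P`: no member can strictly increase her payoff
`u_m = V_m·P_T(e) + p_m(e)·P − c·e_m` by unilaterally changing her effort in `{0,1}`. -/
def isNE (pH pL : ℕ → ℕ → ℝ) (a c P VH VL : ℝ) (eH eL : ℕ) : Prop :=
  (∀ e', e' = 0 ∨ e' = 1 →
    VH * pT a e' eL + pH e' eL * P - c * e' ≤
      VH * pT a eH eL + pH eH eL * P - c * eH) ∧
  (∀ e', e' = 0 ∨ e' = 1 →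
    VL * pT a eH e' + pL eH e' * P - c * e' ≤
      VL * pT a eH eL + pL eH eL * P - c * eL)

/-! At `(1,1)` the only deviation is to shirk, which lowers the team accuracy from `a` to
`(2a+1)/4` and changes the shirker's share of the pool. So `(1,1)` is an equilibrium exactly
when, for each member, `c` is at most her valuation loss `V_m (2a-1)/4` plus `P` times the share
she forfeits by shirking. That forfeited share is `0` under EA, `(2a-1)²/4` under OA and `1/2`
under SV, and `0 ≤ (2a-1)²/4 ≤ 1/2` for `a ∈ (1/2, 1]`. -/

lemma isNE_one_one_iff (pH pL : ℕ → ℕ → ℝ) (a c P VH VL : ℝ) :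
    isNE pH pL a c P VH VL 1 1 ↔
      c ≤ VH * (2 * a - 1) / 4 + (pH 1 1 - pH 0 1) * P ∧
      c ≤ VL * (2 * a - 1) / 4 + (pL 1 1 - pL 1 0) * P := by
  have hT01 : pT a 0 1 = (2 * a + 1) / 4 := by norm_num [pT]
  have hT10 : pT a 1 0 = (2 * a + 1) / 4 := by norm_num [pT]
  have hT11 : pT a 1 1 = a := by norm_num [pT]
  simp only [isNE, forall_eq_or_imp, forall_eq, le_refl, and_true, hT01, hT10, hT11,
    Nat.cast_zero, Nat.cast_one]
  constructor <;> rintro ⟨hH, hL⟩ <;> constructor <;> linarith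

lemma isNE_one_one_mono {pH pL qH qL : ℕ → ℕ → ℝ} {a c P VH VL : ℝ} (hP : 0 ≤ P)
    (hqH : pH 1 1 - pH 0 1 ≤ qH 1 1 - qH 0 1) (hqL : pL 1 1 - pL 1 0 ≤ qL 1 1 - qL 1 0)
    (hp : isNE pH pL a c P VH VL 1 1) : isNE qH qL a c P VH VL 1 1 := by
  rw [isNE_one_one_iff] at hp ⊢
  obtain ⟨hH, hL⟩ := hp
  exact ⟨hH.trans (by gcongr), hL.trans (by gcongr)⟩

lemma pOA_one_one_sub_zero_one (a : ℝ) : pOA a 1 1 - pOA a 0 1 = (2 * a - 1) ^ 2 / 4 := by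
  norm_num [pOA]
  ring

lemma pOA_one_one_sub_one_zero (a : ℝ) : pOA a 1 1 - pOA a 1 0 = (2 * a - 1) ^ 2 / 4 := by
  norm_num [pOA]
  ring

theorem joint_effort_NE_monotone_across_mechanisms_general
    (a c P VH VL : ℝ)
    (ha : 1 / 2 < a ∧ a ≤ 1) (hP : 0 ≤ P) :
    (isNE pEA pEA a c P VH VL 1 1 → isNE (pOA a) (pOA a) a c P VH VL 1 1) ∧
    (isNE (pOA a) (pOA a) a c P VH VL 1 1 → isNE pSVH pSVL a c P VH VL 1 1) := by
  have hOA_le_SV : (2 * a - 1) ^ 2 / 4 ≤ 1 / 2 := by nlinarith [ha.1, ha.2]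
  have hOA_ge_EA : (0 : ℝ) ≤ (2 * a - 1) ^ 2 / 4 := by positivity
  refine ⟨isNE_one_one_mono hP ?_ ?_, isNE_one_one_mono hP ?_ ?_⟩
  · simpa [pEA, pOA_one_one_sub_zero_one] using hOA_ge_EA
  · simpa [pEA, pOA_one_one_sub_one_zero] using hOA_ge_EA
  · simpa [pSVH, pOA_one_one_sub_zero_one] using hOA_le_SV
  · norm_num [pSVL, pSVH, pOA_one_one_sub_one_zero]
    linarith

/-- for every pooled incentive `P ≥ 0`, if `(1,1)` is a Nash equilibrium
of the effort game under Equal Allocation then it is one under Output Agreement, and if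
it is a Nash equilibrium under Output Agreement then it is one under the Shapley Value
mechanism. -/
theorem joint_effort_NE_monotone_across_mechanisms
    (a c P VH VL : ℝ)
    (ha : 1 / 2 < a ∧ a ≤ 1) (hc : 0 < c) (hP : 0 ≤ P)
    (hVL : 0 < VL) (hV : VL < VH) :
    (isNE pEA pEA a c P VH VL 1 1 → isNE (pOA a) (pOA a) a c P VH VL 1 1) ∧
    (isNE (pOA a) (pOA a) a c P VH VL 1 1 → isNE pSVH pSVL a c P VH VL 1 1) :=
  joint_effort_NE_monotone_across_mechanisms_general a c P VH VL ha hP
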